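/- arXiv:cs/0606087 — 12 statements merged into one kernel-verified Lean document; each statement's English description precedes it below -/
import Mathlib

section
/- In an abstract LP-type problem with violator mapping V, for any A, B ⊆ H, V(A) = V(B) implies w(A) = w(B). -/
/-- The violator mapping of an abstract LP-type problem `(H, w)`:
`V G = {h ∈ H : w (G ∪ {h}) > w G}`. -/
def violatorsLP {α W : Type*} [DecidableEq α] [LT W]
    (H : Finset α) (w : Finset α → W) (G : Finset α) : Set α :=
  {h | h ∈ H ∧ w G < w (insert h G)}

section violatorsLP

variable {α W : Type*} [DecidableEq α]

lemma notMem_violatorsLP_of_mem [Preorder W] (H : Finset α) (w : Finset α → W)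
    {G : Finset α} {h : α} (hG : h ∈ G) : h ∉ violatorsLP H w G := fun hV =>
  hV.2.ne (congrArg w (Finset.insert_eq_of_mem hG).symm)

/-- By locality, an element violating `A ∪ s` with `w (A ∪ s) = w A` already violates `A`. -/
lemma weight_union_eq_of_forall_notMem_violatorsLP [LinearOrder W]
    (H : Finset α) (w : Finset α → W)
    (mono : ∀ F G : Finset α, F ⊆ G → G ⊆ H → w F ≤ w G)
    (loc : ∀ F G : Finset α, ∀ h ∈ H, F ⊆ G → G ⊆ H →
      w F = w G → w G < w (insert h G) → w F < w (insert h F))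
    {A B : Finset α} (hA : A ⊆ H) (hB : B ⊆ H) (hnv : ∀ b ∈ B, b ∉ violatorsLP H w A) :
    w (A ∪ B) = w A := by
  induction B using Finset.induction_on with
  | empty => rw [Finset.union_empty]
  | @insert b s _ ih =>
    obtain ⟨hbH, hsH⟩ := Finset.insert_subset_iff.1 hB
    have hs : w (A ∪ s) = w A := ih hsH fun x hx => hnv x (Finset.mem_insert_of_mem hx)
    have hAsH : A ∪ s ⊆ H := Finset.union_subset hA hsH
    have hb_not_viol : ¬ w (A ∪ s) < w (insert b (A ∪ s)) := fun hlt =>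
      hnv b (Finset.mem_insert_self b s)
        ⟨hbH, loc A (A ∪ s) b hbH Finset.subset_union_left hAsH hs.symm hlt⟩
    rw [Finset.union_insert, ← hs]
    exact le_antisymm (not_lt.1 hb_not_viol)
      (mono _ _ (Finset.subset_insert b _) (Finset.insert_subset hbH hAsH))

end violatorsLP

/-- `V A = V B` implies `w A = w B`. -/
theorem stmt_2 {α W : Type*} [DecidableEq α] [LinearOrder W]
    (H : Finset α) (w : Finset α → W)
    (mono : ∀ F G : Finset α, F ⊆ G → G ⊆ H → w F ≤ w G)
    (loc : ∀ F G : Finset α, ∀ h ∈ H, F ⊆ G → G ⊆ H →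
      w F = w G → w G < w (insert h G) → w F < w (insert h F))
    (A B : Finset α) (hA : A ⊆ H) (hB : B ⊆ H)
    (hV : violatorsLP H w A = violatorsLP H w B) :
    w A = w B := by
  have hAB : w (A ∪ B) = w A :=
    weight_union_eq_of_forall_notMem_violatorsLP H w mono loc hA hB fun b hb =>
      hV ▸ notMem_violatorsLP_of_mem H w hb
  have hBA : w (B ∪ A) = w B :=
    weight_union_eq_of_forall_notMem_violatorsLP H w mono loc hB hA fun a ha =>
      hV ▸ notMem_violatorsLP_of_mem H w ha
  rw [← hAB, ← hBA, Finset.union_comm]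
end

section
/- The violator mapping of an abstract LP-type problem satisfies the violator space axioms: Consistency (G ∩ V(G) = ∅ for all G ⊆ H) and Locality (for all F ⊆ G ⊆ H with G ∩ V(F) = ∅, V(G) = V(F)). -/
namespace LPType

variable {α W : Type*} [DecidableEq α]

def IsMonotone [LE W] (H : Finset α) (w : Finset α → W) : Prop :=
  ∀ F G : Finset α, F ⊆ G → G ⊆ H → w F ≤ w G

def IsLocal [LT W] (H : Finset α) (w : Finset α → W) : Prop :=
  ∀ F G : Finset α, ∀ h ∈ H, F ⊆ G → G ⊆ H →
    w F = w G → w G < w (insert h G) → w F < w (insert h F)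

theorem coe_inter_violatorsLP_self [Preorder W] (H : Finset α) (w : Finset α → W)
    (G : Finset α) : (↑G : Set α) ∩ violatorsLP H w G = ∅ := by
  refine Set.eq_empty_iff_forall_notMem.mpr fun x ⟨hxG, _, hlt⟩ => ?_
  rw [Finset.insert_eq_of_mem hxG] at hlt
  exact lt_irrefl _ hlt

variable [LinearOrder W] {H : Finset α} {w : Finset α → W}

theorem weight_union_eq_of_forall_not_lt (mono : IsMonotone H w) (loc : IsLocal H w)
    {F G : Finset α} (hFH : F ⊆ H) (hGH : G ⊆ H)
    (hG : ∀ g ∈ G, ¬ w F < w (insert g F)) : w (F ∪ G) = w F := by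
  induction G using Finset.induction_on with
  | empty => rw [Finset.union_empty]
  | insert a s _ ih =>
    have hsH : s ⊆ H := (Finset.subset_insert a s).trans hGH
    have hs : w (F ∪ s) = w F :=
      ih hsH fun g hg => hG g (Finset.mem_insert_of_mem hg)
    have hle : w (F ∪ insert a s) ≤ w (F ∪ s) := by
      rw [Finset.union_insert]
      exact not_lt.mp fun hlt => hG a (Finset.mem_insert_self a s)
        (loc F (F ∪ s) a (hGH (Finset.mem_insert_self a s)) Finset.subset_union_left
          (Finset.union_subset hFH hsH) hs.symm hlt)
    have hge : w (F ∪ s) ≤ w (F ∪ insert a s) :=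
      mono _ _ (Finset.union_subset_union_right (Finset.subset_insert a s))
        (Finset.union_subset hFH hGH)
    rw [le_antisymm hle hge, hs]

theorem violatorsLP_eq_of_weight_eq (mono : IsMonotone H w) (loc : IsLocal H w)
    {F G : Finset α} (hFG : F ⊆ G) (hGH : G ⊆ H) (hw : w F = w G) :
    violatorsLP H w G = violatorsLP H w F := by
  ext h
  constructor
  · rintro ⟨hH, hlt⟩
    exact ⟨hH, loc F G h hH hFG hGH hw hlt⟩
  · rintro ⟨hH, hlt⟩
    refine ⟨hH, ?_⟩
    calc w G = w F := hw.symm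
      _ < w (insert h F) := hlt
      _ ≤ w (insert h G) :=
        mono _ _ (Finset.insert_subset_insert h hFG) (Finset.insert_subset hH hGH)

end LPType

/-- the violator mapping of an abstract LP-type problem satisfies
Consistency (`G ∩ V G = ∅`) and violator-space Locality
(`F ⊆ G ⊆ H` and `G ∩ V F = ∅` imply `V G = V F`). -/
theorem stmt_5 {α W : Type*} [DecidableEq α] [LinearOrder W]
    (H : Finset α) (w : Finset α → W)
    (mono : ∀ F G : Finset α, F ⊆ G → G ⊆ H → w F ≤ w G)
    (loc : ∀ F G : Finset α, ∀ h ∈ H, F ⊆ G → G ⊆ H →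
      w F = w G → w G < w (insert h G) → w F < w (insert h F)) :
    (∀ G : Finset α, G ⊆ H → (↑G : Set α) ∩ violatorsLP H w G = ∅) ∧
    (∀ F G : Finset α, F ⊆ G → G ⊆ H → (↑G : Set α) ∩ violatorsLP H w F = ∅ →
      violatorsLP H w G = violatorsLP H w F) := by
  refine ⟨fun G _ => LPType.coe_inter_violatorsLP_self H w G, fun F G hFG hGH hdisj => ?_⟩
  have hG : ∀ g ∈ G, ¬ w F < w (insert g F) := fun g hg hlt =>
    Set.eq_empty_iff_forall_notMem.mp hdisj g ⟨hg, hGH hg, hlt⟩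
  have hw : w F = w G := by
    rw [← LPType.weight_union_eq_of_forall_not_lt mono loc (hFG.trans hGH) hGH hG,
      Finset.union_eq_right.mpr hFG]
  exact LPType.violatorsLP_eq_of_weight_eq mono loc hFG hGH hw
end

section
/- Every violator space (H, V) satisfies the following monotonicity property: for all F ⊆ E ⊆ G ⊆ H, if V(F) = V(G) then V(E) = V(F). -/
/-- monotonicity of violator spaces: for `F ⊆ E ⊆ G ⊆ H`,
`V F = V G` implies `V E = V F`. -/
theorem stmt_7 {α : Type*} [DecidableEq α]
    (H : Finset α) (V : Finset α → Finset α)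
    (cons : ∀ G : Finset α, G ⊆ H → G ∩ V G = ∅)
    (loc : ∀ F G : Finset α, F ⊆ G → G ⊆ H → G ∩ V F = ∅ → V G = V F)
    (F E G : Finset α) (hFE : F ⊆ E) (hEG : E ⊆ G) (hG : G ⊆ H)
    (h : V F = V G) :
    V E = V F := by
  have hGV : G ∩ V F = ∅ := h ▸ cons G hG
  have hEV : E ∩ V F = ∅ :=
    Finset.subset_empty.mp (hGV ▸ Finset.inter_subset_inter_right hEG)
  exact loc F E hFE (hEG.trans hG) hEV
end

section
/- In a violator space (H, V), for every R ⊆ H and h ∈ H: V(R) ≠ V(R ∪ {h}) if and only if h ∈ V(R). -/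
section ViolatorSpace

variable {α : Type*} [DecidableEq α] {H : Finset α} {V : Finset α → Finset α}

theorem notMem_violator_insert_self
    (cons : ∀ G : Finset α, G ⊆ H → G ∩ V G = ∅)
    {R : Finset α} {h : α} (hsub : insert h R ⊆ H) : h ∉ V (insert h R) := fun hv =>
  Finset.notMem_empty h <|
    cons _ hsub ▸ Finset.mem_inter.mpr ⟨Finset.mem_insert_self h R, hv⟩

theorem violator_insert_eq_of_notMem
    (cons : ∀ G : Finset α, G ⊆ H → G ∩ V G = ∅)
    (loc : ∀ F G : Finset α, F ⊆ G → G ⊆ H → G ∩ V F = ∅ → V G = V F)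
    {R : Finset α} {h : α} (hsub : insert h R ⊆ H) (hnot : h ∉ V R) :
    V (insert h R) = V R := by
  have hR : R ⊆ H := (Finset.subset_insert h R).trans hsub
  have hdisj : insert h R ∩ V R = ∅ := by
    rw [Finset.insert_inter_of_notMem hnot, cons R hR]
  exact loc R (insert h R) (Finset.subset_insert h R) hsub hdisj

end ViolatorSpace

/-- in a violator space `(H, V)`, for `R ⊆ H` and `h ∈ H`:
`V R ≠ V (R ∪ {h})` if and only if `h ∈ V R`. -/
theorem stmt_8 {α : Type*} [DecidableEq α]
    (H : Finset α) (V : Finset α → Finset α)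
    (cons : ∀ G : Finset α, G ⊆ H → G ∩ V G = ∅)
    (loc : ∀ F G : Finset α, F ⊆ G → G ⊆ H → G ∩ V F = ∅ → V G = V F)
    (R : Finset α) (hR : R ⊆ H) (h : α) (hh : h ∈ H) :
    V R ≠ V (insert h R) ↔ h ∈ V R := by
  have hsub : insert h R ⊆ H := Finset.insert_subset hh hR
  rw [Ne, ← not_iff_not, not_not]
  exact ⟨fun heq => heq ▸ notMem_violator_insert_self cons hsub,
    fun hnot => (violator_insert_eq_of_notMem cons loc hsub hnot).symm⟩
end

section
/- In a violator space (H, V), for every R ⊆ H and h ∈ H: V(R) ≠ V(R \ {h}) if and only if h is contained in every basis of R. -/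
/-!
If `h` misses some basis `B` of `R`, then `B ⊆ R \ {h} ⊆ R`, and since `V R` is disjoint from `R`,
locality squeezes `V (R \ {h})` to `V B = V R`. Conversely, if `V (R \ {h}) = V R`, an
inclusion-minimal subset of `R \ {h}` with violators `V R` is a basis of `R` avoiding `h`.
-/

theorem violators_eq_of_subset_of_subset {α : Type*} [DecidableEq α]
    {H : Finset α} {V : Finset α → Finset α}
    (cons : ∀ G : Finset α, G ⊆ H → G ∩ V G = ∅)
    (loc : ∀ F G : Finset α, F ⊆ G → G ⊆ H → G ∩ V F = ∅ → V G = V F)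
    {B G R : Finset α} (hBG : B ⊆ G) (hGR : G ⊆ R) (hR : R ⊆ H) (hB : V B = V R) :
    V G = V R := by
  have hdisj : G ∩ V B = ∅ := by
    rw [hB, ← Finset.subset_empty, ← cons R hR]
    exact Finset.inter_subset_inter_right hGR
  rw [loc B G hBG (hGR.trans hR) hdisj, hB]

theorem stmt_9_general {α : Type*} [DecidableEq α]
    (H : Finset α) (V : Finset α → Finset α)
    (cons : ∀ G : Finset α, G ⊆ H → G ∩ V G = ∅)
    (loc : ∀ F G : Finset α, F ⊆ G → G ⊆ H → G ∩ V F = ∅ → V G = V F)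
    (R : Finset α) (hR : R ⊆ H) (h : α) :
    V R ≠ V (R.erase h) ↔
      ∀ B : Finset α, B ⊆ R → V B = V R → (∀ B' : Finset α, B' ⊂ B → V B' ≠ V R) →
        h ∈ B := by
  constructor
  · intro hne B hBR hVB _
    by_contra hhB
    have hB_erase : B ⊆ R.erase h := Finset.subset_erase.2 ⟨hBR, hhB⟩
    exact hne (violators_eq_of_subset_of_subset cons loc hB_erase (R.erase_subset h) hR hVB).symm
  · intro hbasis heq
    obtain ⟨B, hB_erase, hBmin⟩ :=
      exists_minimal_le_of_wellFoundedLT (fun B => V B = V R) (R.erase h) heq.symm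
    have hhB : h ∈ B := hbasis B (hB_erase.trans (R.erase_subset h)) hBmin.prop
      fun _ hB' => hBmin.not_prop_of_lt hB'
    exact R.notMem_erase h (hB_erase hhB)

/-- in a violator space `(H, V)`, for `R ⊆ H` and `h ∈ H`:
`V R ≠ V (R \ {h})` if and only if `h` is contained in every basis of `R`
(a basis of `R` being an inclusion-minimal `B ⊆ R` with `V B = V R`). -/
theorem stmt_9 {α : Type*} [DecidableEq α]
    (H : Finset α) (V : Finset α → Finset α)
    (cons : ∀ G : Finset α, G ⊆ H → G ∩ V G = ∅)
    (loc : ∀ F G : Finset α, F ⊆ G → G ⊆ H → G ∩ V F = ∅ → V G = V F)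
    (R : Finset α) (hR : R ⊆ H) (h : α) (hh : h ∈ H) :
    V R ≠ V (R.erase h) ↔
      ∀ B : Finset α, B ⊆ R → V B = V R → (∀ B' : Finset α, B' ⊂ B → V B' ≠ V R) →
        h ∈ B :=
  stmt_9_general H V cons loc R hR h
end

section
/- In a violator space (H, V), if C ⊆ G and G ∩ V(C) ≠ ∅, then G ∩ V(C) contains at least one element from every basis of G. -/
/-!
If a basis `B` of `G` missed `V C`, locality applied to `B ∪ C ⊆ G`, once from `C` and once
from `B`, would give `V C = V (B ∪ C) = V B = V G`; then `G ∩ V C = G ∩ V G = ∅` by consistency.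
-/

open Finset

namespace ViolatorSpace

variable {α : Type*} [DecidableEq α] {H : Finset α} {V : Finset α → Finset α}

theorem inter_eq_empty_of_subset (cons : ∀ G : Finset α, G ⊆ H → G ∩ V G = ∅)
    {F G : Finset α} (hG : G ⊆ H) (hFG : F ⊆ G) : F ∩ V G = ∅ :=
  subset_empty.1 <| (inter_subset_inter_right hFG).trans (cons G hG).le

theorem union_eq_right (cons : ∀ G : Finset α, G ⊆ H → G ∩ V G = ∅)
    (loc : ∀ F G : Finset α, F ⊆ G → G ⊆ H → G ∩ V F = ∅ → V G = V F)
    {B C : Finset α} (hBC : B ∪ C ⊆ H) (hB : B ∩ V C = ∅) : V (B ∪ C) = V C := by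
  refine loc C (B ∪ C) subset_union_right hBC ?_
  rw [union_inter_distrib_right, hB, cons C (subset_union_right.trans hBC), empty_union]

theorem eq_of_inter_eq_empty (cons : ∀ G : Finset α, G ⊆ H → G ∩ V G = ∅)
    (loc : ∀ F G : Finset α, F ⊆ G → G ⊆ H → G ∩ V F = ∅ → V G = V F)
    {B C G : Finset α} (hG : G ⊆ H) (hBG : B ⊆ G) (hCG : C ⊆ G) (hVB : V B = V G)
    (hB : B ∩ V C = ∅) : V C = V G := by
  have hBCG : B ∪ C ⊆ G := union_subset hBG hCG
  have hBC_VB : (B ∪ C) ∩ V B = ∅ := hVB ▸ inter_eq_empty_of_subset cons hG hBCG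
  calc V C = V (B ∪ C) := (union_eq_right cons loc (hBCG.trans hG) hB).symm
    _ = V B := loc B (B ∪ C) subset_union_left (hBCG.trans hG) hBC_VB
    _ = V G := hVB

end ViolatorSpace

/-- in a violator space `(H, V)`, if `C ⊆ G` and `G ∩ V C ≠ ∅`, then
`G ∩ V C` contains an element of every basis of `G`. -/
theorem stmt_10 {α : Type*} [DecidableEq α]
    (H : Finset α) (V : Finset α → Finset α)
    (cons : ∀ G : Finset α, G ⊆ H → G ∩ V G = ∅)
    (loc : ∀ F G : Finset α, F ⊆ G → G ⊆ H → G ∩ V F = ∅ → V G = V F)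
    (G C : Finset α) (hG : G ⊆ H) (hCG : C ⊆ G)
    (hne : (G ∩ V C).Nonempty) :
    ∀ B : Finset α, B ⊆ G → V B = V G → (∀ B' : Finset α, B' ⊂ B → V B' ≠ V G) →
      (B ∩ (G ∩ V C)).Nonempty := by
  intro B hBG hVB _
  rw [← inter_assoc, inter_eq_left.2 hBG, nonempty_iff_ne_empty]
  intro hB
  have hVC : V C = V G := ViolatorSpace.eq_of_inter_eq_empty cons loc hG hBG hCG hVB hB
  rw [hVC, cons G hG] at hne
  exact not_nonempty_empty hne
end

section
/- In a violator space (H, V), if B is a basis of W ∪ R with W ∪ R ⊆ G and B has no violators in G (i.e., G ∩ V(B) = ∅), then B is a basis of G. -/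
theorem stmt_11_general {α : Type*} [DecidableEq α]
    (H : Finset α) (V : Finset α → Finset α)
    (loc : ∀ F G : Finset α, F ⊆ G → G ⊆ H → G ∩ V F = ∅ → V G = V F)
    (W R G B : Finset α) (hG : G ⊆ H) (hWRG : W ∪ R ⊆ G)
    (hB : B ⊆ W ∪ R) (hVB : V B = V (W ∪ R))
    (hmin : ∀ B' : Finset α, B' ⊂ B → V B' ≠ V (W ∪ R))
    (hnoviol : G ∩ V B = ∅) :
    B ⊆ G ∧ V B = V G ∧ ∀ B' : Finset α, B' ⊂ B → V B' ≠ V G := by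
  have hBG : B ⊆ G := hB.trans hWRG
  have hVG : V G = V B := loc B G hBG hG hnoviol
  refine ⟨hBG, hVG.symm, fun B' hB' hB'G => hmin B' hB' ?_⟩
  rw [hB'G, hVG, hVB]

/-- in a violator space `(H, V)`, if `B` is a basis of `W ∪ R`,
`W ∪ R ⊆ G ⊆ H`, and `G ∩ V B = ∅`, then `B` is a basis of `G`. -/
theorem stmt_11 {α : Type*} [DecidableEq α]
    (H : Finset α) (V : Finset α → Finset α)
    (cons : ∀ G : Finset α, G ⊆ H → G ∩ V G = ∅)
    (loc : ∀ F G : Finset α, F ⊆ G → G ⊆ H → G ∩ V F = ∅ → V G = V F)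
    (W R G B : Finset α) (hG : G ⊆ H) (hWRG : W ∪ R ⊆ G)
    (hB : B ⊆ W ∪ R) (hVB : V B = V (W ∪ R))
    (hmin : ∀ B' : Finset α, B' ⊂ B → V B' ≠ V (W ∪ R))
    (hnoviol : G ∩ V B = ∅) :
    B ⊆ G ∧ V B = V G ∧ ∀ B' : Finset α, B' ⊂ B → V B' ≠ V G :=
  stmt_11_general H V loc W R G B hG hWRG hB hVB hmin hnoviol
end

section
/- Let (H, V) be the violator mapping of an abstract LP-type problem (H, w, W, ≤) and define bases B, C to be equivalent if V(B) = V(C), and define [B] ≤₀ [C] if there exist B' ∈ [B], C' ∈ [C] with B' ∩ V(C') = ∅. Then the transitive closure ≤₁ of ≤₀ on equivalence classes of bases is antisymmetric; i.e., the violator space arising from an LP-type problem is acyclic. -/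
/-- A basis of the LP-type problem: `B ⊆ H` with `w F ≠ w B` for all proper `F ⊂ B`. -/
def IsLPBasis {α W : Type*} (H : Finset α) (w : Finset α → W) (B : Finset α) : Prop :=
  B ⊆ H ∧ ∀ F : Finset α, F ⊂ B → w F ≠ w B

/-- The relation `≤₀` lifted to equivalence classes of bases (where `B ∼ C` iff
`V B = V C`): `[B] ≤₀ [C]` iff there are representatives `B' ∼ B`, `C' ∼ C`
(both bases) with `B' ∩ V C' = ∅`. -/
def leZero {α W : Type*} [DecidableEq α] [LT W]
    (H : Finset α) (w : Finset α → W) (B C : Finset α) : Prop :=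
  ∃ B' C' : Finset α, IsLPBasis H w B' ∧ IsLPBasis H w C' ∧
    violatorsLP H w B' = violatorsLP H w B ∧
    violatorsLP H w C' = violatorsLP H w C ∧
    (↑B' : Set α) ∩ violatorsLP H w C' = ∅

theorem inter_violatorsLP_self_eq_empty {α W : Type*} [DecidableEq α] [Preorder W]
    {H : Finset α} {w : Finset α → W} (B : Finset α) :
    (↑B : Set α) ∩ violatorsLP H w B = ∅ := by
  refine Set.eq_empty_iff_forall_notMem.2 fun h ⟨hB, _, hlt⟩ => ?_
  rw [Finset.insert_eq_self.2 hB] at hlt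
  exact lt_irrefl _ hlt

section ViolatorsLP

variable {α W : Type*} [DecidableEq α] [LinearOrder W]

/-- Under monotonicity and locality the weight of a subset of `H` depends only on its violators;
this is the resulting strict order on violator sets. -/
def ViolatorClassLT (H : Finset α) (w : Finset α → W) (S T : Set α) : Prop :=
  ∃ B C : Finset α, B ⊆ H ∧ C ⊆ H ∧ violatorsLP H w B = S ∧ violatorsLP H w C = T ∧
    w B < w C

variable {H : Finset α} {w : Finset α → W}
variable (mono : ∀ F G : Finset α, F ⊆ G → G ⊆ H → w F ≤ w G)
variable (loc : ∀ F G : Finset α, ∀ h ∈ H, F ⊆ G → G ⊆ H →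
  w F = w G → w G < w (insert h G) → w F < w (insert h F))
include mono loc

theorem weight_union_eq_of_inter_violatorsLP_eq_empty {X Y : Finset α} (hX : X ⊆ H)
    (hY : Y ⊆ H) (hXY : (↑X : Set α) ∩ violatorsLP H w Y = ∅) : w (X ∪ Y) = w Y := by
  induction X using Finset.induction_on with
  | empty => rw [Finset.empty_union]
  | @insert a S _ ih =>
    have haH : a ∈ H := hX (Finset.mem_insert_self a S)
    have hS : S ⊆ H := (Finset.subset_insert a S).trans hX
    have hSY : S ∪ Y ⊆ H := Finset.union_subset hS hY
    have ihw : w (S ∪ Y) = w Y :=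
      ih hS (Set.subset_eq_empty (Set.inter_subset_inter_left _ (by simp)) hXY)
    have ha : a ∉ violatorsLP H w Y := fun ha =>
      Set.eq_empty_iff_forall_notMem.1 hXY a ⟨by simp, ha⟩
    have hnot : ¬ w (S ∪ Y) < w (insert a (S ∪ Y)) := fun hlt =>
      ha ⟨haH, loc Y _ a haH Finset.subset_union_right hSY ihw.symm hlt⟩
    rw [Finset.insert_union, ← ihw]
    exact le_antisymm (not_lt.1 hnot) (mono _ _ (Finset.subset_insert _ _)
      (Finset.insert_subset haH hSY))

theorem weight_le_of_inter_violatorsLP_eq_empty {X Y : Finset α} (hX : X ⊆ H) (hY : Y ⊆ H)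
    (hXY : (↑X : Set α) ∩ violatorsLP H w Y = ∅) : w X ≤ w Y :=
  (mono _ _ Finset.subset_union_left (Finset.union_subset hX hY)).trans
    (weight_union_eq_of_inter_violatorsLP_eq_empty mono loc hX hY hXY).le

theorem weight_eq_of_violatorsLP_eq {X Y : Finset α} (hX : X ⊆ H) (hY : Y ⊆ H)
    (h : violatorsLP H w X = violatorsLP H w Y) : w X = w Y :=
  le_antisymm
    (weight_le_of_inter_violatorsLP_eq_empty mono loc hX hY
      (h ▸ inter_violatorsLP_self_eq_empty X))
    (weight_le_of_inter_violatorsLP_eq_empty mono loc hY hX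
      (h.symm ▸ inter_violatorsLP_self_eq_empty Y))

theorem violatorsLP_eq_of_subset_of_weight_eq {F G : Finset α} (hFG : F ⊆ G) (hG : G ⊆ H)
    (hw : w F = w G) : violatorsLP H w F = violatorsLP H w G := by
  ext h
  refine ⟨fun ⟨hH, hlt⟩ => ⟨hH, ?_⟩,
    fun ⟨hH, hlt⟩ => ⟨hH, loc F G h hH hFG hG hw hlt⟩⟩
  exact hw ▸ hlt.trans_le (mono _ _ (Finset.insert_subset_insert h hFG)
    (Finset.insert_subset hH hG))

theorem violatorsLP_eq_of_inter_violatorsLP_eq_empty_of_weight_eq {X Y : Finset α}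
    (hX : X ⊆ H) (hY : Y ⊆ H) (hXY : (↑X : Set α) ∩ violatorsLP H w Y = ∅)
    (hw : w X = w Y) :
    violatorsLP H w X = violatorsLP H w Y := by
  have hU : w (X ∪ Y) = w Y := weight_union_eq_of_inter_violatorsLP_eq_empty mono loc hX hY hXY
  have hXYH : X ∪ Y ⊆ H := Finset.union_subset hX hY
  rw [violatorsLP_eq_of_subset_of_weight_eq mono loc Finset.subset_union_left hXYH
      (hw.trans hU.symm),
    violatorsLP_eq_of_subset_of_weight_eq mono loc Finset.subset_union_right hXYH hU.symm]

theorem ViolatorClassLT.trans {S T U : Set α} (hST : ViolatorClassLT H w S T)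
    (hTU : ViolatorClassLT H w T U) : ViolatorClassLT H w S U := by
  obtain ⟨B₁, C₁, hB₁, hC₁, rfl, rfl, hlt₁⟩ := hST
  obtain ⟨B₂, C₂, hB₂, hC₂, hV, rfl, hlt₂⟩ := hTU
  have hmid : w C₁ = w B₂ := weight_eq_of_violatorsLP_eq mono loc hC₁ hB₂ hV.symm
  exact ⟨B₁, C₂, hB₁, hC₂, rfl, rfl, hlt₁.trans (hmid ▸ hlt₂)⟩

theorem ViolatorClassLT.irrefl (S : Set α) : ¬ ViolatorClassLT H w S S := by
  rintro ⟨B, C, hB, hC, hVB, hVC, hlt⟩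
  exact hlt.ne (weight_eq_of_violatorsLP_eq mono loc hB hC (hVB.trans hVC.symm))

theorem reflGen_violatorClassLT_of_leZero {X Y : Finset α} (h : leZero H w X Y) :
    Relation.ReflGen (ViolatorClassLT H w) (violatorsLP H w X) (violatorsLP H w Y) := by
  obtain ⟨B, C, hB, hC, hVB, hVC, hBC⟩ := h
  rw [← hVB, ← hVC]
  rcases (weight_le_of_inter_violatorsLP_eq_empty mono loc hB.1 hC.1 hBC).lt_or_eq
    with hlt | heq
  · exact .single ⟨B, C, hB.1, hC.1, rfl, rfl, hlt⟩
  · rw [violatorsLP_eq_of_inter_violatorsLP_eq_empty_of_weight_eq mono loc hB.1 hC.1 hBC heq]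

theorem reflGen_violatorClassLT_of_transGen_leZero {X Y : Finset α}
    (h : Relation.TransGen (leZero H w) X Y) :
    Relation.ReflGen (ViolatorClassLT H w) (violatorsLP H w X) (violatorsLP H w Y) := by
  have : IsTrans (Set α) (ViolatorClassLT H w) := ⟨fun _ _ _ => ViolatorClassLT.trans mono loc⟩
  rw [← Relation.reflTransGen_eq_reflGen, ← Relation.transGen_reflGen]
  exact h.lift (violatorsLP H w) fun _ _ => reflGen_violatorClassLT_of_leZero mono loc

end ViolatorsLP

theorem stmt_12_general {α W : Type*} [DecidableEq α] [LinearOrder W]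
    (H : Finset α) (w : Finset α → W)
    (mono : ∀ F G : Finset α, F ⊆ G → G ⊆ H → w F ≤ w G)
    (loc : ∀ F G : Finset α, ∀ h ∈ H, F ⊆ G → G ⊆ H →
      w F = w G → w G < w (insert h G) → w F < w (insert h F))
    (B C : Finset α)
    (hBC : Relation.TransGen (leZero H w) B C)
    (hCB : Relation.TransGen (leZero H w) C B) :
    violatorsLP H w B = violatorsLP H w C := by
  rcases (Relation.reflGen_iff _ _ _).1
    (reflGen_violatorClassLT_of_transGen_leZero mono loc hBC) with hCB' | hlt₁
  · exact hCB'.symm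
  rcases (Relation.reflGen_iff _ _ _).1
    (reflGen_violatorClassLT_of_transGen_leZero mono loc hCB) with hBC' | hlt₂
  · exact hBC'
  exact absurd (hlt₁.trans mono loc hlt₂) (ViolatorClassLT.irrefl mono loc _)

/-- in the violator space arising from an abstract LP-type problem,
the transitive closure `≤₁` of `≤₀` on equivalence classes of bases is antisymmetric;
i.e., if `[B] ≤₁ [C]` and `[C] ≤₁ [B]` then `[B] = [C]` (that is, `V B = V C`). -/
theorem stmt_12 {α W : Type*} [DecidableEq α] [LinearOrder W]
    (H : Finset α) (w : Finset α → W)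
    (mono : ∀ F G : Finset α, F ⊆ G → G ⊆ H → w F ≤ w G)
    (loc : ∀ F G : Finset α, ∀ h ∈ H, F ⊆ G → G ⊆ H →
      w F = w G → w G < w (insert h G) → w F < w (insert h F))
    (B C : Finset α) (hB : IsLPBasis H w B) (hC : IsLPBasis H w C)
    (hBC : Relation.TransGen (leZero H w) B C)
    (hCB : Relation.TransGen (leZero H w) C B) :
    violatorsLP H w B = violatorsLP H w C :=
  stmt_12_general H w mono loc B C hBC hCB
end

section
/- There exists a violator space on a 3-element set H = {f, g, h} that is not acyclic: define V(∅) = {f,g,h}, V({f}) = {h}, V({g}) = {f}, V({h}) = {g}, V({f,g}) = {h}, V({f,h}) = {g}, V({g,h}) = {f}, V(H) = ∅. This mapping satisfies Consistency and Locality, the singletons are pairwise non-equivalent bases, and {f} ≤₀ {h} ≤₀ {g} ≤₀ {f}, so the transitive closure ≤₁ is not antisymmetric. -/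
/-- The cyclic violator mapping on `H = {f, g, h} = {0, 1, 2}`. -/
def V13 : Finset (Fin 3) → Finset (Fin 3) := fun G =>
  if G = ∅ then {0, 1, 2}
  else if G = {0} then {2}
  else if G = {1} then {0}
  else if G = {2} then {1}
  else if G = {0, 1} then {2}
  else if G = {0, 2} then {1}
  else if G = {1, 2} then {0}
  else ∅

/-- A basis of the violator space `(univ, V13)`. -/
def IsBasis13 (B : Finset (Fin 3)) : Prop :=
  ∀ F : Finset (Fin 3), F ⊂ B → (B ∩ V13 F).Nonempty

/-- The relation `≤₀` on equivalence classes of bases (`B ∼ C` iff `V13 B = V13 C`):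
`[B] ≤₀ [C]` iff some basis representatives satisfy `B' ∩ V13 C' = ∅`. -/
def leZero13 (B C : Finset (Fin 3)) : Prop :=
  ∃ B' C' : Finset (Fin 3), IsBasis13 B' ∧ IsBasis13 C' ∧
    V13 B' = V13 B ∧ V13 C' = V13 C ∧ B' ∩ V13 C' = ∅

theorem inter_V13_self (G : Finset (Fin 3)) : G ∩ V13 G = ∅ := by
  revert G; decide

theorem V13_eq_of_subset_of_inter_eq_empty :
    ∀ F G : Finset (Fin 3), F ⊆ G → G ∩ V13 F = ∅ → V13 G = V13 F := by
  decide

theorem isBasis13_singleton (i : Fin 3) : IsBasis13 {i} := by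
  unfold IsBasis13; revert i; decide

theorem leZero13_of_isBasis13 {B C : Finset (Fin 3)} (hB : IsBasis13 B) (hC : IsBasis13 C)
    (h : B ∩ V13 C = ∅) : leZero13 B C :=
  ⟨B, C, hB, hC, rfl, rfl, h⟩

theorem leZero13_singleton {i j : Fin 3} (h : ({i} : Finset (Fin 3)) ∩ V13 {j} = ∅) :
    leZero13 {i} {j} :=
  leZero13_of_isBasis13 (isBasis13_singleton i) (isBasis13_singleton j) h

/-- `V13` is a violator space (Consistency and Locality hold), the
singletons `{0}, {1}, {2}` are pairwise non-equivalent bases, the cycle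
`{0} ≤₀ {2} ≤₀ {1} ≤₀ {0}` holds, and hence the transitive closure `≤₁` of `≤₀` is
not antisymmetric: this violator space is not acyclic. -/
theorem stmt_13 :
    (∀ G : Finset (Fin 3), G ∩ V13 G = ∅) ∧
    (∀ F G : Finset (Fin 3), F ⊆ G → G ∩ V13 F = ∅ → V13 G = V13 F) ∧
    (IsBasis13 {0} ∧ IsBasis13 {1} ∧ IsBasis13 {2}) ∧
    (V13 {0} ≠ V13 {1} ∧ V13 {1} ≠ V13 {2} ∧ V13 {0} ≠ V13 {2}) ∧
    (({0} : Finset (Fin 3)) ∩ V13 {2} = ∅ ∧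
     ({2} : Finset (Fin 3)) ∩ V13 {1} = ∅ ∧
     ({1} : Finset (Fin 3)) ∩ V13 {0} = ∅) ∧
    (Relation.TransGen leZero13 {0} {1} ∧ Relation.TransGen leZero13 {1} {0} ∧
      V13 {0} ≠ V13 {1}) := by
  have h02 : ({0} : Finset (Fin 3)) ∩ V13 {2} = ∅ := by decide
  have h21 : ({2} : Finset (Fin 3)) ∩ V13 {1} = ∅ := by decide
  have h10 : ({1} : Finset (Fin 3)) ∩ V13 {0} = ∅ := by decide
  have hV01 : V13 {0} ≠ V13 {1} := by decide
  refine ⟨inter_V13_self, V13_eq_of_subset_of_inter_eq_empty,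
    ⟨isBasis13_singleton 0, isBasis13_singleton 1, isBasis13_singleton 2⟩,
    ⟨hV01, by decide, by decide⟩, ⟨h02, h21, h10⟩, ?_, ?_, hV01⟩
  · exact .head (leZero13_singleton h02) (.single (leZero13_singleton h21))
  · exact .single (leZero13_singleton h10)
end

section
/- Sampling Lemma: Let H be a finite set with |H| = n and let w be any function from subsets of H to a set W. Define V(R) = {h ∈ H \ R : w(R) ≠ w(R ∪ {h})} and X(R) = {h ∈ R : w(R) ≠ w(R \ {h})}. For 0 ≤ r < n, let v_r be the expected size of V(R) and x_{r+1} the expected size of X(R') where R and R' are uniformly random subsets of H of sizes r and r+1 respectively. Then v_r / (n − r) = x_{r+1} / (r + 1). -/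
/-! Both sides count the same pairs `(R, h)` with `|R| = r`, `h ∉ R` and `w R ≠ w (R ∪ {h})`,
once as `R` together with an element of `V(R)`, once as `R' = R ∪ {h}` together with an element
of `X(R')`. The normalisations agree because `C(n, r+1) (r+1) = C(n, r) (n-r)`. -/

open Finset

theorem Nat.cast_choose_succ_mul {R : Type*} [CommRing R] (n k : ℕ) :
    (n.choose (k + 1) : R) * (k + 1) = n.choose k * (n - k) := by
  rcases le_or_gt k n with hkn | hnk
  · simpa [Nat.cast_sub hkn] using congrArg (Nat.cast : ℕ → R) (Nat.choose_succ_right_eq n k)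
  · simp [Nat.choose_eq_zero_of_lt hnk, Nat.choose_eq_zero_of_lt (hnk.trans k.lt_succ_self)]

namespace Finset

variable {α : Type*} [DecidableEq α]

theorem sum_card_filter_insert_eq_sum_card_filter_erase (H : Finset α)
    (p : Finset α → Finset α → Prop) [DecidableRel p] (r : ℕ) :
    ∑ R ∈ H.powersetCard r, #{h ∈ H \ R | p R (insert h R)} =
      ∑ R ∈ H.powersetCard (r + 1), #{h ∈ R | p (R.erase h) R} := by
  simp only [← card_sigma]
  refine card_nbij' (fun x => ⟨insert x.2 x.1, x.2⟩) (fun x => ⟨x.1.erase x.2, x.2⟩)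
    ?_ ?_ ?_ ?_
  · rintro ⟨R, h⟩ hx
    simp only [coe_sigma, Set.mem_sigma_iff, mem_coe, mem_powersetCard, mem_filter,
      mem_sdiff] at hx ⊢
    obtain ⟨⟨hRH, rfl⟩, ⟨hH, hR⟩, hp⟩ := hx
    exact ⟨⟨insert_subset hH hRH, card_insert_of_notMem hR⟩, mem_insert_self h R,
      by rwa [erase_insert hR]⟩
  · rintro ⟨R, h⟩ hx
    simp only [coe_sigma, Set.mem_sigma_iff, mem_coe, mem_powersetCard, mem_filter,
      mem_sdiff] at hx ⊢
    obtain ⟨⟨hRH, hcard⟩, hR, hp⟩ := hx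
    exact ⟨⟨(erase_subset h R).trans hRH, by rw [card_erase_of_mem hR, hcard]; rfl⟩,
      ⟨hRH hR, notMem_erase h R⟩, by rwa [insert_erase hR]⟩
  · rintro ⟨R, h⟩ hx
    simp only [coe_sigma, Set.mem_sigma_iff, mem_coe, mem_filter, mem_sdiff] at hx
    simp [erase_insert hx.2.1.2]
  · rintro ⟨R, h⟩ hx
    simp only [coe_sigma, Set.mem_sigma_iff, mem_coe, mem_filter] at hx
    simp [insert_erase hx.2.1]

end Finset

theorem stmt_15_general {α W : Type*} [DecidableEq α] [DecidableEq W]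
    (H : Finset α) (w : Finset α → W) (r : ℕ) :
    ((∑ R ∈ H.powersetCard r,
        (((H \ R).filter fun h => w R ≠ w (insert h R)).card : ℚ)) /
      (H.card.choose r)) / ((H.card : ℚ) - r)
    = ((∑ R ∈ H.powersetCard (r + 1),
        ((R.filter fun h => w R ≠ w (R.erase h)).card : ℚ)) /
      (H.card.choose (r + 1))) / ((r : ℚ) + 1) := by
  have hcount := sum_card_filter_insert_eq_sum_card_filter_erase H (fun A B => w B ≠ w A) r
  simp only [ne_comm (a := w (insert _ _))] at hcount
  rw [div_div, div_div, Nat.cast_choose_succ_mul]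
  congr 1
  exact_mod_cast hcount

/-- Sampling Lemma: for a finite set `H` with `|H| = n`, an arbitrary
function `w` on subsets of `H`, `V R = {h ∈ H \ R : w R ≠ w (R ∪ {h})}`,
`X R = {h ∈ R : w R ≠ w (R \ {h})}`, and `0 ≤ r < n`:
`v_r / (n - r) = x_{r+1} / (r + 1)`, where `v_r` (resp. `x_{r+1}`) is the expected
size of `V R` (resp. `X R'`) over uniformly random subsets `R` of size `r`
(resp. `R'` of size `r + 1`). -/
theorem stmt_15 {α W : Type*} [DecidableEq α] [DecidableEq W]
    (H : Finset α) (w : Finset α → W) (r : ℕ) (hr : r < H.card) :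
    ((∑ R ∈ H.powersetCard r,
        (((H \ R).filter fun h => w R ≠ w (insert h R)).card : ℚ)) /
      (H.card.choose r)) / ((H.card : ℚ) - r)
    = ((∑ R ∈ H.powersetCard (r + 1),
        ((R.filter fun h => w R ≠ w (R.erase h)).card : ℚ)) /
      (H.card.choose (r + 1))) / ((r : ℚ) + 1) :=
  stmt_15_general H w r
end

section
/- In a violator space of combinatorial dimension δ, every subset R ⊆ H has at most δ extreme elements, where h ∈ R is extreme in R if V(R) ≠ V(R \ {h}). -/
/-!
Choose a basis `B` of `R`. If `h ∈ R` is outside `B`, then `B ⊆ R \ {h} ⊆ R`, and by consistency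
`R \ {h}` misses `V R = V B`; locality then forces `V (R \ {h}) = V B = V R`, so `h` is not
extreme. Hence the extreme elements of `R` lie in `B`, which has at most `δ` elements.
-/

open Finset

namespace ViolatorSpace

variable {α : Type*} (V : Finset α → Finset α)

def IsBasis (R B : Finset α) : Prop :=
  B ⊆ R ∧ V B = V R ∧ ∀ B' ⊂ B, V B' ≠ V R

theorem exists_isBasis (R : Finset α) : ∃ B, IsBasis V R B := by
  obtain ⟨B, hBR, hmin⟩ := exists_minimal_le_of_wellFoundedLT (fun B => V B = V R) R rfl
  exact ⟨B, hBR, hmin.prop, fun _ hB' => hmin.not_prop_of_lt hB'⟩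

variable [DecidableEq α]

def extremeElements (R : Finset α) : Finset α :=
  R.filter fun h => V R ≠ V (R.erase h)

variable {V} {H : Finset α}

theorem extremeElements_subset
    (cons : ∀ G : Finset α, G ⊆ H → G ∩ V G = ∅)
    (loc : ∀ F G : Finset α, F ⊆ G → G ⊆ H → G ∩ V F = ∅ → V G = V F)
    {R B : Finset α} (hR : R ⊆ H) (hBR : B ⊆ R) (hBV : V B = V R) :
    extremeElements V R ⊆ B := by
  intro h hh
  obtain ⟨-, hext⟩ := mem_filter.mp hh
  by_contra hhB
  have hB_erase : B ⊆ R.erase h := subset_erase.mpr ⟨hBR, hhB⟩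
  have hdisj : R.erase h ∩ V B = ∅ := by
    rw [hBV, ← subset_empty, ← cons R hR]
    exact inter_subset_inter_right (erase_subset h R)
  exact hext (by rw [loc B _ hB_erase ((erase_subset h R).trans hR) hdisj, hBV])

end ViolatorSpace

open ViolatorSpace

/-- in a violator space `(H, V)` of combinatorial dimension `δ`
(every basis has at most `δ` elements), every `R ⊆ H` has at most `δ` extreme
elements, where `h ∈ R` is extreme in `R` if `V R ≠ V (R \ {h})`. -/
theorem stmt_17 {α : Type*} [DecidableEq α]
    (H : Finset α) (V : Finset α → Finset α) (δ : ℕ)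
    (cons : ∀ G : Finset α, G ⊆ H → G ∩ V G = ∅)
    (loc : ∀ F G : Finset α, F ⊆ G → G ⊆ H → G ∩ V F = ∅ → V G = V F)
    (hdim : ∀ G : Finset α, G ⊆ H → ∀ B : Finset α, B ⊆ G → V B = V G →
      (∀ B' : Finset α, B' ⊂ B → V B' ≠ V G) → B.card ≤ δ)
    (R : Finset α) (hR : R ⊆ H) :
    (R.filter fun h => V R ≠ V (R.erase h)).card ≤ δ := by
  obtain ⟨B, hBR, hBV, hBmin⟩ := exists_isBasis V R
  calc (extremeElements V R).card
      ≤ B.card := card_le_card (extremeElements_subset cons loc hR hBR hBV)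
    _ ≤ δ := hdim R hR B hBR hBV hBmin
end

section
/- Let Π = (Π₁, …, Π_δ) be a partition of a finite set H into δ nonempty blocks, and let ψ be a unique sink orientation of the grid on H. Define V(G) = s_ψ(sink(G)) if G intersects every block, and V(G) = union of all blocks disjoint from G otherwise. Then (H, V) is a violator space: it satisfies Consistency and Locality. -/
/-! The sink of a Π-valid `F` is still a sink of the larger subgrid spanned by `G ⊇ F` once
`s (sink F)` misses `G`, so uniqueness of sinks gives `sink G = sink F`. If `F` is not Π-valid,
`G ∩ V F = ∅` says that `G` adds no element of a block missed by `F`, so `F` and `G` miss the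
same blocks. -/

open Finset

section MissingBlocks

variable {ι α : Type*} [Fintype ι] [DecidableEq α]

/-- The paper's `Ḡ`. -/
def missingBlocks (P : ι → Finset α) (G : Finset α) : Finset α :=
  univ.biUnion fun i => if G ∩ P i = ∅ then P i else ∅

theorem mem_missingBlocks {P : ι → Finset α} {G : Finset α} {x : α} :
    x ∈ missingBlocks P G ↔ ∃ i, G ∩ P i = ∅ ∧ x ∈ P i := by
  simp only [missingBlocks, mem_biUnion, mem_univ, true_and]
  refine exists_congr fun i => ?_
  split_ifs with h <;> simp [h]

theorem disjoint_missingBlocks (P : ι → Finset α) (G : Finset α) :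
    Disjoint G (missingBlocks P G) := by
  refine disjoint_left.mpr fun x hxG hx => ?_
  obtain ⟨i, hGi, hxi⟩ := mem_missingBlocks.mp hx
  exact (eq_empty_iff_forall_notMem.mp hGi) x (mem_inter.mpr ⟨hxG, hxi⟩)

variable {P : ι → Finset α} {F G : Finset α}

theorem inter_eq_empty_iff_of_disjoint_missingBlocks (hFG : F ⊆ G)
    (hdisj : Disjoint G (missingBlocks P F)) (i : ι) :
    G ∩ P i = ∅ ↔ F ∩ P i = ∅ := by
  refine ⟨fun hG => subset_empty.mp (hG ▸ inter_subset_inter_right hFG), fun hF => ?_⟩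
  refine eq_empty_iff_forall_notMem.mpr fun x hx => ?_
  obtain ⟨hxG, hxi⟩ := mem_inter.mp hx
  exact disjoint_left.mp hdisj hxG (mem_missingBlocks.mpr ⟨i, hF, hxi⟩)

theorem missingBlocks_eq_of_disjoint (hFG : F ⊆ G) (hdisj : Disjoint G (missingBlocks P F)) :
    missingBlocks P G = missingBlocks P F := by
  ext x
  simp only [mem_missingBlocks, inter_eq_empty_iff_of_disjoint_missingBlocks hFG hdisj]

theorem forall_inter_nonempty_iff_of_disjoint_missingBlocks (hFG : F ⊆ G)
    (hdisj : Disjoint G (missingBlocks P F)) :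
    (∀ i, (G ∩ P i).Nonempty) ↔ ∀ i, (F ∩ P i).Nonempty := by
  simp only [nonempty_iff_ne_empty, ne_eq, inter_eq_empty_iff_of_disjoint_missingBlocks hFG hdisj]

end MissingBlocks

theorem stmt_18_general {α : Type*} [DecidableEq α] {δ : ℕ}
    (H : Finset α) (P : Fin δ → Finset α)
    (s : Finset α → Finset α) (sink : Finset α → Finset α)
    (hsink : ∀ G : Finset α, G ⊆ H → (∀ i, (G ∩ P i).Nonempty) →
      (∀ i, (sink G ∩ P i).card = 1) ∧ sink G ⊆ G ∧ s (sink G) ∩ G = ∅)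
    (huniq : ∀ G : Finset α, G ⊆ H → (∀ i, (G ∩ P i).Nonempty) →
      ∀ J : Finset α, (∀ i, (J ∩ P i).card = 1) → J ⊆ G → s J ∩ G = ∅ → J = sink G)
    (V : Finset α → Finset α)
    (hV1 : ∀ G : Finset α, G ⊆ H → (∀ i, (G ∩ P i).Nonempty) → V G = s (sink G))
    (hV2 : ∀ G : Finset α, G ⊆ H → ¬ (∀ i, (G ∩ P i).Nonempty) →
      V G = Finset.univ.biUnion fun i => if G ∩ P i = ∅ then P i else ∅) :
    (∀ G : Finset α, G ⊆ H → G ∩ V G = ∅) ∧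
    (∀ F G : Finset α, F ⊆ G → G ⊆ H → G ∩ V F = ∅ → V G = V F) := by
  constructor
  · intro G hGH
    by_cases hval : ∀ i, (G ∩ P i).Nonempty
    · rw [hV1 G hGH hval, inter_comm]
      exact (hsink G hGH hval).2.2
    · rw [hV2 G hGH hval]
      exact disjoint_iff_inter_eq_empty.mp (disjoint_missingBlocks P G)
  · intro F G hFG hGH hGVF
    have hFH : F ⊆ H := hFG.trans hGH
    by_cases hval : ∀ i, (F ∩ P i).Nonempty
    · have hGval : ∀ i, (G ∩ P i).Nonempty := fun i =>
        (hval i).mono (inter_subset_inter_right hFG)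
      obtain ⟨hFvertex, hFsub, -⟩ := hsink F hFH hval
      rw [hV1 F hFH hval, inter_comm] at hGVF
      rw [hV1 F hFH hval, hV1 G hGH hGval,
        huniq G hGH hGval (sink F) hFvertex (hFsub.trans hFG) hGVF]
    · rw [hV2 F hFH hval] at hGVF ⊢
      have hdisj : Disjoint G (missingBlocks P F) := disjoint_iff_inter_eq_empty.mpr hGVF
      have hGval : ¬ ∀ i, (G ∩ P i).Nonempty :=
        (forall_inter_nonempty_iff_of_disjoint_missingBlocks hFG hdisj).not.mpr hval
      rw [hV2 G hGH hGval]
      exact missingBlocks_eq_of_disjoint hFG hdisj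

/-- let `Π = (P 0, …, P (δ-1))` be a partition of a finite set `H` into
`δ` nonempty blocks, and `ψ` a unique sink orientation of the grid on `H`, given by its
outmap `s` on vertices (`s J ⊆ H \ J`), with `sink G` the unique sink of the subgrid
spanned by a Π-valid `G` (the unique vertex `J ⊆ G` with no outgoing edge into `G`,
i.e. `s J ∩ G = ∅`). Define `V G = s (sink G)` if `G` is Π-valid, and `V G` to be the
union of all blocks disjoint from `G` otherwise. Then `(H, V)` is a violator space:
it satisfies Consistency and Locality. -/
theorem stmt_18 {α : Type*} [DecidableEq α] {δ : ℕ}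
    (H : Finset α) (P : Fin δ → Finset α)
    (hPsub : ∀ i, P i ⊆ H)
    (hPne : ∀ i, (P i).Nonempty)
    (hPdisj : ∀ i j, i ≠ j → Disjoint (P i) (P j))
    (hPcov : ∀ h ∈ H, ∃ i, h ∈ P i)
    (s : Finset α → Finset α) (sink : Finset α → Finset α)
    (hs : ∀ J : Finset α, (∀ i, (J ∩ P i).card = 1) → s J ⊆ H \ J)
    (hsink : ∀ G : Finset α, G ⊆ H → (∀ i, (G ∩ P i).Nonempty) →
      (∀ i, (sink G ∩ P i).card = 1) ∧ sink G ⊆ G ∧ s (sink G) ∩ G = ∅)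
    (huniq : ∀ G : Finset α, G ⊆ H → (∀ i, (G ∩ P i).Nonempty) →
      ∀ J : Finset α, (∀ i, (J ∩ P i).card = 1) → J ⊆ G → s J ∩ G = ∅ → J = sink G)
    (V : Finset α → Finset α)
    (hV1 : ∀ G : Finset α, G ⊆ H → (∀ i, (G ∩ P i).Nonempty) → V G = s (sink G))
    (hV2 : ∀ G : Finset α, G ⊆ H → ¬ (∀ i, (G ∩ P i).Nonempty) →
      V G = Finset.univ.biUnion fun i => if G ∩ P i = ∅ then P i else ∅) :
    (∀ G : Finset α, G ⊆ H → G ∩ V G = ∅) ∧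
    (∀ F G : Finset α, F ⊆ G → G ⊆ H → G ∩ V F = ∅ → V G = V F) :=
  stmt_18_general H P s sink hsink huniq V hV1 hV2
end
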